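/- Let (Ω, Σ, μ) be a measure space with μ(Ω) = ∞, and let (f_n) be a sequence of real-valued measurable functions on Ω converging to a measurable function f almost everywhere. Then f_n → f almost uniformly if and only if for every λ > 0 there exists an index n_λ such that μ{ω ∈ Ω : sup_{n ≥ n_λ} |f_n(ω) − f(ω)| ≥ λ} < ∞. -/

import Mathlib

open MeasureTheory Filter Topology
open scoped ENNReal NNReal

/-!
If `f n → g` uniformly on `E`, the tail supremum `sup_{n ≥ N} |f n - g|` is eventually below `λ`
on `E`, so the set where it reaches `λ` lies in `Eᶜ`. Conversely, Egorov's theorem applies on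
that level set, which has finite measure, while off it the tail is already `λ`-close; gluing the
exceptional sets of the levels `λ = 1 / (k + 1)`, with measures summing to less than `ε`, gives
almost uniform convergence.
-/

section

variable {α β ι : Type*} [PseudoEMetricSpace β] {f : ι → α → β} {g : α → β}

theorem TendstoUniformlyOn.exists_setOf_le_iSup_edist_subset_compl [SemilatticeSup ι]
    [Nonempty ι] {E : Set α} (h : TendstoUniformlyOn f g atTop E) {l : ℝ≥0∞} (hl : 0 < l) :
    ∃ N, {ω | l ≤ ⨆ n ≥ N, edist (f n ω) (g ω)} ⊆ Eᶜ := by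
  obtain ⟨a, ha, hal⟩ := exists_between hl
  obtain ⟨N, hN⟩ := eventually_atTop.1 (EMetric.tendstoUniformlyOn_iff.1 h a ha)
  refine ⟨N, fun ω (hω : l ≤ _) hωE => hω.not_gt ?_⟩
  calc ⨆ n ≥ N, edist (f n ω) (g ω) ≤ a :=
        iSup₂_le fun n hn => (edist_comm (g ω) (f n ω) ▸ hN n hn ω hωE).le
    _ < l := hal

variable [MeasurableSpace α] {μ : Measure α}

theorem exists_measure_le_eventually_edist_lt [SemilatticeSup ι] [Nonempty ι] [Countable ι]
    (hf : ∀ n, Measurable fun ω => edist (f n ω) (g ω))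
    (hfg : ∀ᵐ ω ∂μ, Tendsto (fun n => f n ω) atTop (𝓝 (g ω))) {l : ℝ≥0∞} (hl : 0 < l) {N : ι}
    (hN : μ {ω | l ≤ ⨆ n ≥ N, edist (f n ω) (g ω)} ≠ ∞) {δ : ℝ≥0} (hδ : 0 < δ) :
    ∃ t, MeasurableSet t ∧ μ t ≤ δ ∧ ∀ᶠ n in atTop, ∀ ω ∈ tᶜ, edist (g ω) (f n ω) < l := by
  set B := {ω | l ≤ ⨆ n ≥ N, edist (f n ω) (g ω)}
  have hB : MeasurableSet B :=
    measurableSet_le measurable_const (.iSup fun n => .iSup fun _ => hf n)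
  obtain ⟨t, -, ht, hμt, hunif⟩ := tendstoUniformlyOn_of_ae_tendsto_of_measurable_edist hf hB hN
    (hfg.mono fun ω hω _ => hω) (NNReal.coe_pos.2 hδ)
  refine ⟨t, ht, by simpa using hμt, ?_⟩
  filter_upwards [EMetric.tendstoUniformlyOn_iff.1 hunif l hl, eventually_ge_atTop N]
    with n hB_close hn ω hωt
  by_cases hωB : ω ∈ B
  · exact hB_close ω ⟨hωB, hωt⟩
  · rw [edist_comm]
    exact (le_iSup₂ (f := fun m (_ : m ≥ N) => edist (f m ω) (g ω)) n hn).trans_lt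
      (not_le.1 hωB)

theorem exists_tendstoUniformlyOn_of_forall_exists_measure_le [Preorder ι]
    (h : ∀ l : ℝ, 0 < l → ∀ δ : ℝ≥0, 0 < δ → ∃ t, MeasurableSet t ∧ μ t ≤ δ ∧
      ∀ᶠ n in atTop, ∀ ω ∈ tᶜ, edist (g ω) (f n ω) < ENNReal.ofReal l)
    {ε : ℝ≥0∞} (hε : 0 < ε) :
    ∃ E, MeasurableSet E ∧ μ Eᶜ < ε ∧ TendstoUniformlyOn f g atTop E := by
  obtain ⟨δ, hδ, hδε⟩ := ENNReal.exists_pos_sum_of_countable hε.ne' ℕ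
  choose t ht hμt hclose using fun k : ℕ => h (1 / (k + 1)) Nat.one_div_pos_of_nat (δ k) (hδ k)
  refine ⟨(⋃ k, t k)ᶜ, (MeasurableSet.iUnion ht).compl, ?_, ?_⟩
  · rw [compl_compl]
    calc μ (⋃ k, t k) ≤ ∑' k, μ (t k) := measure_iUnion_le t
      _ ≤ ∑' k, (δ k : ℝ≥0∞) := ENNReal.tsum_le_tsum hμt
      _ < ε := hδε
  · refine EMetric.tendstoUniformlyOn_iff.2 fun η hη => ?_
    obtain ⟨a, ha, haη⟩ := exists_between hη
    obtain ⟨k, hk⟩ := exists_nat_one_div_lt (ENNReal.toReal_pos ha.ne' haη.ne_top)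
    have hkη : ENNReal.ofReal (1 / (k + 1)) < η :=
      ((ENNReal.ofReal_lt_iff_lt_toReal (by positivity) haη.ne_top).2 hk).trans haη
    filter_upwards [hclose k] with n hn ω hω
    exact (hn ω fun hωt => hω (Set.mem_iUnion.2 ⟨k, hωt⟩)).trans hkη

end

theorem egorov_infinite_measure_iff_general {Ω : Type*} [MeasurableSpace Ω] (μ : Measure Ω)
    (f : ℕ → Ω → ℝ) (g : Ω → ℝ)
    (hf : ∀ n, Measurable (f n)) (hg : Measurable g)
    (hae : ∀ᵐ ω ∂μ, Tendsto (fun n => f n ω) atTop (𝓝 (g ω))) :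
    (∀ ε : ℝ≥0∞, 0 < ε → ∃ E : Set Ω, MeasurableSet E ∧ μ Eᶜ < ε ∧
      TendstoUniformlyOn f g atTop E) ↔
    (∀ l : ℝ, 0 < l → ∃ N : ℕ,
      μ {ω | ENNReal.ofReal l ≤ ⨆ n ≥ N, (‖f n ω - g ω‖₊ : ℝ≥0∞)} < ⊤) := by
  simp only [← nndist_eq_nnnorm, ← edist_nndist]
  constructor
  · intro h l hl
    obtain ⟨E, -, hμE, hunif⟩ := h 1 one_pos
    obtain ⟨N, hN⟩ := hunif.exists_setOf_le_iSup_edist_subset_compl (ENNReal.ofReal_pos.2 hl)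
    exact ⟨N, (measure_mono hN).trans_lt (hμE.trans ENNReal.one_lt_top)⟩
  · intro h ε hε
    refine exists_tendstoUniformlyOn_of_forall_exists_measure_le (fun l hl δ hδ => ?_) hε
    obtain ⟨N, hN⟩ := h l hl
    exact exists_measure_le_eventually_edist_lt (fun n => (hf n).edist hg) hae
      (ENNReal.ofReal_pos.2 hl) hN.ne hδ

/-- Egorov's theorem for infinite measure: if `μ Ω = ∞` and `f n → g` a.e., then
`f n → g` almost uniformly iff for every `λ > 0` there is `n_λ` with
`μ {ω | sup_{n ≥ n_λ} |f n ω - g ω| ≥ λ} < ∞`. -/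
theorem egorov_infinite_measure_iff {Ω : Type*} [MeasurableSpace Ω] (μ : Measure Ω)
    (hμ : μ Set.univ = ⊤)
    (f : ℕ → Ω → ℝ) (g : Ω → ℝ)
    (hf : ∀ n, Measurable (f n)) (hg : Measurable g)
    (hae : ∀ᵐ ω ∂μ, Tendsto (fun n => f n ω) atTop (𝓝 (g ω))) :
    (∀ ε : ℝ≥0∞, 0 < ε → ∃ E : Set Ω, MeasurableSet E ∧ μ Eᶜ < ε ∧
      TendstoUniformlyOn f g atTop E) ↔
    (∀ l : ℝ, 0 < l → ∃ N : ℕ,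
      μ {ω | ENNReal.ofReal l ≤ ⨆ n ≥ N, (‖f n ω - g ω‖₊ : ℝ≥0∞)} < ⊤) :=
  egorov_infinite_measure_iff_general μ f g hf hg hae
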